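/- In every standard dynamic Odintsov–Wansing model, the induction axiom (φ ∧ [α*](φ → [α]φ)) → [α*]φ is valid. -/

import Mathlib

mutual
inductive DynProg : Type where
  | atom : ℕ → DynProg
  | seq : DynProg → DynProg → DynProg
  | union : DynProg → DynProg → DynProg
  | star : DynProg → DynProg
  | test : DynForm → DynProg
inductive DynForm : Type where
  | atom : ℕ → DynForm
  | bot  : DynForm
  | snot : DynForm → DynForm
  | and  : DynForm → DynForm → DynForm
  | or   : DynForm → DynForm → DynForm
  | imp  : DynForm → DynForm → DynForm
  | box  : DynProg → DynForm → DynForm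
  | dia  : DynProg → DynForm → DynForm
end

def DynForm.neg (φ : DynForm) : DynForm := .imp φ .bot

def DynForm.biimp (φ ψ : DynForm) : DynForm := .and (.imp φ ψ) (.imp ψ φ)

structure DynModel : Type 1 where
  S : Type
  ne : Nonempty S
  Ra : ℕ → S → S → Prop
  Vp : ℕ → S → Prop
  Vm : ℕ → S → Prop

mutual
def progRel (M : DynModel) : DynProg → M.S → M.S → Prop
  | .atom a, x, y => M.Ra a x y
  | .seq α β, x, z => ∃ y, progRel M α x y ∧ progRel M β y z
  | .union α β, x, y => progRel M α x y ∨ progRel M β x y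
  | .star α, x, y => Relation.ReflTransGen (fun u v => progRel M α u v) x y
  | .test φ, x, y => x = y ∧ dverify M x φ
def dverify (M : DynModel) : M.S → DynForm → Prop
  | x, .atom p => M.Vp p x
  | _, .bot => False
  | x, .snot φ => dfalsify M x φ
  | x, .and φ ψ => dverify M x φ ∧ dverify M x ψ
  | x, .or φ ψ => dverify M x φ ∨ dverify M x ψ
  | x, .imp φ ψ => dverify M x φ → dverify M x ψ
  | x, .box α φ => ∀ y, progRel M α x y → dverify M y φ
  | x, .dia α φ => ∃ y, progRel M α x y ∧ dverify M y φ
def dfalsify (M : DynModel) : M.S → DynForm → Prop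
  | x, .atom p => M.Vm p x
  | _, .bot => True
  | x, .snot φ => dverify M x φ
  | x, .and φ ψ => dfalsify M x φ ∨ dfalsify M x ψ
  | x, .or φ ψ => dfalsify M x φ ∧ dfalsify M x ψ
  | x, .imp φ ψ => dverify M x φ ∧ dfalsify M x ψ
  | x, .box α φ => ∃ y, progRel M α x y ∧ dfalsify M y φ
  | x, .dia α φ => ∀ y, progRel M α x y → dfalsify M y φ
end

def validIn (M : DynModel) (φ : DynForm) : Prop := ∀ x : M.S, dverify M x φ

def DynValid (φ : DynForm) : Prop := ∀ M : DynModel, validIn M φ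

theorem Relation.ReflTransGen.preserved_of_reachable {α : Type*} {r : α → α → Prop}
    {P : α → Prop} {x y : α} (hx : P x)
    (hstep : ∀ b c, Relation.ReflTransGen r x b → P b → r b c → P c)
    (hxy : Relation.ReflTransGen r x y) : P y := by
  induction hxy with
  | refl => exact hx
  | tail hxb hbc ih => exact hstep _ _ hxb ih hbc

theorem stmt12 (M : DynModel) (α : DynProg) (φ : DynForm) :
    validIn M (.imp (.and φ (.box (.star α) (.imp φ (.box α φ)))) (.box (.star α) φ)) :=
  fun _ ⟨hφ, hind⟩ _ hxy =>
    hxy.preserved_of_reachable (P := (dverify M · φ)) hφ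
      fun b c hxb hb hbc => hind b hxb hb c hbc
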